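/- arXiv:1909.07823 — 6 statements merged into one kernel-verified Lean document; each statement's English description precedes it below -/
import Mathlib

section
/- For all positive integers n and k, T_k(n) = Σ_{i=1}^{n} k^{ω(i)}. -/
/-!
Grouping the tuples by their product `m`, it suffices to count the pairwise coprime `k`-tuples
with product exactly `m ≠ 0`. In such a tuple each prime power `p ^ v_p(m)` lies entirely in one
entry, so the tuple amounts to a colouring of the `ω(m)` prime factors of `m` by the `k`
positions, and every colouring arises.
-/

open Finset

namespace Nat

theorem prod_primeFactors_pow_factorization_mul_of_coprime {a b : ℕ} (hab : Coprime a b)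
    (ha : a ≠ 0) : ∏ p ∈ a.primeFactors, p ^ (a * b).factorization p = a := by
  conv_rhs => rw [prod_primeFactors_pow_factorization ha]
  refine prod_congr rfl fun p hp => ?_
  rw [factorization_eq_of_coprime_left hab (mem_primeFactors_iff_mem_primeFactorsList.mp hp)]

def coprimeFinMulAntidiag (k m : ℕ) : Finset (Fin k → ℕ) :=
  {a ∈ finMulAntidiag k m | ∀ i j, i ≠ j → Coprime (a i) (a j)}

section CoprimeFinMulAntidiag

variable {k m : ℕ} {a : Fin k → ℕ}

theorem mem_coprimeFinMulAntidiag :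
    a ∈ coprimeFinMulAntidiag k m ↔ a ∈ finMulAntidiag k m ∧ ∀ i j, i ≠ j → Coprime (a i) (a j) :=
  mem_filter

theorem eq_prod_primeFactors_pow_factorization_of_mem_coprimeFinMulAntidiag
    (ha : a ∈ coprimeFinMulAntidiag k m) (i : Fin k) :
    a i = ∏ p ∈ (a i).primeFactors, p ^ m.factorization p := by
  obtain ⟨ha, hcop⟩ := mem_coprimeFinMulAntidiag.mp ha
  have hcop_rest : Coprime (a i) (∏ j ∈ univ.erase i, a j) :=
    Coprime.prod_right fun j hj => hcop i j (mem_erase.mp hj).1.symm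
  rw [← prod_eq_of_mem_finMulAntidiag ha, ← mul_prod_erase _ _ (mem_univ i),
    prod_primeFactors_pow_factorization_mul_of_coprime hcop_rest
      (ne_zero_of_mem_finMulAntidiag ha i)]

theorem existsUnique_prime_dvd_of_mem_coprimeFinMulAntidiag
    (ha : a ∈ coprimeFinMulAntidiag k m) {p : ℕ} (hp : p ∈ m.primeFactors) :
    ∃! i, p ∣ a i := by
  obtain ⟨ha, hcop⟩ := mem_coprimeFinMulAntidiag.mp ha
  have hpp := prime_of_mem_primeFactors hp
  obtain ⟨i, -, hi⟩ := (hpp.prime.dvd_finsetProd_iff a).mp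
    (prod_eq_of_mem_finMulAntidiag ha ▸ dvd_of_mem_primeFactors hp)
  refine ⟨i, hi, fun j hj => ?_⟩
  by_contra hji
  exact Nat.Prime.not_coprime_iff_dvd.mpr ⟨p, hpp, hj, hi⟩ (hcop j i hji)

end CoprimeFinMulAntidiag

def prodPrimePowersOfColoring {k : ℕ} (m : ℕ) (c : m.primeFactors → Fin k) (i : Fin k) : ℕ :=
  ∏ p with c p = i, (p : ℕ) ^ m.factorization p

section Coloring

variable {k m : ℕ} (c : m.primeFactors → Fin k)

theorem prime_dvd_prodPrimePowersOfColoring_iff (p : m.primeFactors) (i : Fin k) :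
    (p : ℕ) ∣ prodPrimePowersOfColoring m c i ↔ c p = i := by
  have hpp := prime_of_mem_primeFactors p.2
  constructor
  · intro h
    obtain ⟨q, hq, hpq⟩ := (hpp.prime.dvd_finsetProd_iff _).mp h
    have hpq : p = q := Subtype.ext <|
      (prime_dvd_prime_iff_eq hpp (prime_of_mem_primeFactors q.2)).mp (hpp.dvd_of_dvd_pow hpq)
    exact hpq ▸ (mem_filter.mp hq).2
  · intro h
    exact (dvd_pow_self _ (Finsupp.mem_support_iff.mp p.2)).trans
      (dvd_prod_of_mem _ (mem_filter.mpr ⟨mem_univ p, h⟩))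

theorem prodPrimePowersOfColoring_mem (hm : m ≠ 0) :
    prodPrimePowersOfColoring m c ∈ coprimeFinMulAntidiag k m := by
  have hprod : prodPrimePowersOfColoring m c ∈ finMulAntidiag k m := by
    simp only [mem_finMulAntidiag, prodPrimePowersOfColoring]
    rw [prod_fiberwise, ← prod_primeFactors_coe_pow_factorization hm]
    exact ⟨rfl, hm⟩
  refine mem_filter.mpr ⟨hprod, fun i j hij => coprime_of_dvd fun q hq hqi hqj => hij ?_⟩
  have hqm : q ∈ m.primeFactors :=
    mem_primeFactors.mpr ⟨hq, hqi.trans (dvd_of_mem_finMulAntidiag hprod i), hm⟩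
  rw [← (prime_dvd_prodPrimePowersOfColoring_iff c ⟨q, hqm⟩ i).mp hqi,
    (prime_dvd_prodPrimePowersOfColoring_iff c ⟨q, hqm⟩ j).mp hqj]

theorem prodPrimePowersOfColoring_injective :
    Function.Injective (prodPrimePowersOfColoring (k := k) m) := fun c c' h => funext fun p =>
  ((prime_dvd_prodPrimePowersOfColoring_iff c' p _).mp
    (h ▸ (prime_dvd_prodPrimePowersOfColoring_iff c p _).mpr rfl)).symm

theorem exists_prodPrimePowersOfColoring_eq {a : Fin k → ℕ}
    (ha : a ∈ coprimeFinMulAntidiag k m) : ∃ c, prodPrimePowersOfColoring m c = a := by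
  choose c hc hc_unique using fun p : m.primeFactors =>
    existsUnique_prime_dvd_of_mem_coprimeFinMulAntidiag ha p.2
  have hcolor : ∀ p i, c p = i ↔ (p : ℕ) ∣ a i :=
    fun p i => ⟨(· ▸ hc p), fun h => (hc_unique p i h).symm⟩
  have hm := (mem_finMulAntidiag.mp (mem_coprimeFinMulAntidiag.mp ha).1).2
  refine ⟨c, funext fun i => ?_⟩
  calc prodPrimePowersOfColoring m c i
      = ∏ p : m.primeFactors with p.1 ∣ a i, p.1 ^ m.factorization p := by
        simp only [prodPrimePowersOfColoring, hcolor]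
    _ = ∏ p ∈ m.primeFactors with p ∣ a i, p ^ m.factorization p := by
        rw [prod_filter, prod_filter,
          prod_coe_sort (f := fun p => if p ∣ a i then p ^ m.factorization p else 1)]
    _ = a i := by
        rw [primeFactors_filter_dvd_of_dvd hm
            (dvd_of_mem_finMulAntidiag (mem_coprimeFinMulAntidiag.mp ha).1 i),
          ← eq_prod_primeFactors_pow_factorization_of_mem_coprimeFinMulAntidiag ha]

end Coloring

theorem card_coprimeFinMulAntidiag {k m : ℕ} (hm : m ≠ 0) :
    #(coprimeFinMulAntidiag k m) = k ^ #m.primeFactors := by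
  calc #(coprimeFinMulAntidiag k m) = #(univ : Finset (m.primeFactors → Fin k)) :=
        (card_nbij _ (fun c _ => prodPrimePowersOfColoring_mem c hm)
          prodPrimePowersOfColoring_injective.injOn
          fun a ha => (exists_prodPrimePowersOfColoring_eq ha).imp
            fun c hc => ⟨mem_univ c, hc⟩).symm
    _ = k ^ #m.primeFactors := by simp

theorem coprimeFinMulAntidiag_eq_filter_piFinset {k m n : ℕ} (hm : m ≠ 0) (hmn : m ≤ n) :
    coprimeFinMulAntidiag k m =
      {a ∈ (Fintype.piFinset fun _ : Fin k => Icc 1 n).filter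
        (fun a => (∀ i j, i ≠ j → Coprime (a i) (a j)) ∧ ∏ i, a i ≤ n) | ∏ i, a i = m} := by
  ext a
  simp only [mem_filter, Fintype.mem_piFinset, mem_Icc, mem_coprimeFinMulAntidiag]
  constructor
  · rintro ⟨ha, hcop⟩
    have hprod := prod_eq_of_mem_finMulAntidiag ha
    refine ⟨⟨fun i => ⟨one_le_iff_ne_zero.mpr (ne_zero_of_mem_finMulAntidiag ha i), ?_⟩,
      hcop, hprod ▸ hmn⟩, hprod⟩
    exact (le_of_dvd (pos_of_ne_zero hm) (dvd_of_mem_finMulAntidiag ha i)).trans hmn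
  · rintro ⟨⟨-, hcop, -⟩, hprod⟩
    exact ⟨mem_finMulAntidiag.mpr ⟨hprod, hm⟩, hcop⟩

end Nat

theorem count_pairwise_coprime_tuples_prod_le_general (n k : ℕ) :
    ((Fintype.piFinset fun _ : Fin k => Finset.Icc 1 n).filter
        (fun a => (∀ i j, i ≠ j → Nat.Coprime (a i) (a j)) ∧ ∏ i, a i ≤ n)).card
      = ∑ i ∈ Finset.Icc 1 n, k ^ i.primeFactors.card := by
  rw [card_eq_sum_card_fiberwise (f := fun a : Fin k → ℕ => ∏ i, a i) (t := Icc 1 n)]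
  · refine sum_congr rfl fun m hm => ?_
    obtain ⟨hm_pos, hmn⟩ := mem_Icc.mp hm
    rw [← Nat.coprimeFinMulAntidiag_eq_filter_piFinset (by omega) hmn,
      Nat.card_coprimeFinMulAntidiag (by omega)]
  · intro a ha
    simp only [coe_filter, Fintype.mem_piFinset, mem_Icc, Set.mem_ofPred_eq, coe_Icc] at ha ⊢
    exact ⟨one_le_prod' fun i _ => (ha.1 i).1, ha.2.2⟩

/-- For all positive integers `n` and `k`,
`T_k(n) = Σ_{i=1}^{n} k ^ ω(i)`, where `T_k(n)` is the number of ordered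
`k`-tuples `(a 1, …, a k)` of positive integers `≤ n` that are pairwise
relatively prime and whose product is at most `n`. -/
theorem count_pairwise_coprime_tuples_prod_le (n k : ℕ) (hn : 0 < n) (hk : 0 < k) :
    ((Fintype.piFinset fun _ : Fin k => Finset.Icc 1 n).filter
        (fun a => (∀ i j, i ≠ j → Nat.Coprime (a i) (a j)) ∧ ∏ i, a i ≤ n)).card
      = ∑ i ∈ Finset.Icc 1 n, k ^ i.primeFactors.card :=
  count_pairwise_coprime_tuples_prod_le_general n k
end

section
/- For all positive integers n and k, 0 ≤ n · Σ_{i=1}^{n} δ_k(i)/i − Σ_{i=1}^{n} ⌊n/i⌋ δ_k(i) ≤ Δ_k(n), where the middle expression is computed in the rational numbers. In particular, Σ_{i=1}^{n} k^{ω(i)} = n · Σ_{i=1}^{n} δ_k(i)/i + O(Δ_k(n)). -/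
/-! Writing `k = (k - 1) + 1` and expanding binomially over the squarefree divisors gives
`k ^ ω(m) = ∑_{d ∣ m} δ_k(d)`, so `∑_{m ≤ n} k ^ ω(m) = ∑_{d ≤ n} ⌊n / d⌋ δ_k(d)`.
Replacing `⌊n / d⌋` by `n / d` changes each term by a fractional part in `[0, 1)` times
`δ_k(d) ≥ 0`, so the total change lies between `0` and `Δ_k(n)`. -/

/-- `delta k n` is the generalization `δ_k` of `μ²`: it equals `(k-1)^{ω(n)}`
when `n` is squarefree and `0` otherwise (in particular `δ_k(1) = 1`). -/
def delta (k n : ℕ) : ℕ :=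
  if Squarefree n then (k - 1) ^ n.primeFactors.card else 0

/-- `Delta k x = Σ_{n ≤ x} δ_k(n)` is the summatory function of `δ_k`. -/
def Delta (k x : ℕ) : ℕ := ∑ n ∈ Finset.Icc 1 x, delta k n

open Finset ArithmeticFunction

lemma sum_divisors_delta {k m : ℕ} (hk : 0 < k) (hm : m ≠ 0) :
    ∑ d ∈ m.divisors, delta k d = k ^ m.primeFactors.card := by
  obtain ⟨j, rfl⟩ : ∃ j, k = j + 1 := ⟨k - 1, by omega⟩
  have hsupp : ∑ d ∈ m.divisors, delta (j + 1) d
      = ∑ d ∈ m.divisors with Squarefree d, j ^ d.primeFactors.card := by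
    rw [sum_filter]; rfl
  have hfactors : (UniqueFactorizationMonoid.normalizedFactors m).toFinset = m.primeFactors := by
    rw [Nat.factors_eq]; rfl
  have hprod (t) (ht : t ∈ m.primeFactors.powerset) : t.val.prod.primeFactors = t := by
    rw [prod_val]
    exact Nat.primeFactors_prod fun p hp => Nat.prime_of_mem_primeFactors (mem_powerset.mp ht hp)
  rw [hsupp, Nat.sum_divisors_filter_squarefree hm, hfactors,
    sum_congr rfl fun t ht => by rw [hprod t ht], sum_powerset_apply_card, add_pow]
  simp [mul_comm]

def deltaArithmeticFunction (k : ℕ) : ArithmeticFunction ℕ :=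
  ⟨delta k, by simp [delta]⟩

lemma sum_Icc_pow_card_primeFactors_eq_sum_delta_mul_div {k : ℕ} (hk : 0 < k) (n : ℕ) :
    ∑ i ∈ Icc 1 n, k ^ i.primeFactors.card = ∑ i ∈ Icc 1 n, delta k i * (n / i) := by
  have hIcc : Icc 1 n = Ioc 0 n := Icc_succ_left_eq_Ioc 0 n
  rw [hIcc]
  refine (sum_congr rfl fun i hi => ?_).trans
    (sum_Ioc_mul_zeta_eq_sum (deltaArithmeticFunction k) n)
  rw [coe_mul_zeta_apply]
  exact (sum_divisors_delta hk (mem_Ioc.1 hi).1.ne').symm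

lemma natCast_div_sub_natCast_div_mem_Ico {K : Type*} [Field K] [LinearOrder K]
    [IsStrictOrderedRing K] [FloorSemiring K] (n i : ℕ) :
    (n : K) / i - (n / i : ℕ) ∈ Set.Ico 0 1 := by
  rw [← Nat.floor_div_eq_div (K := K)]
  exact ⟨sub_nonneg.2 (Nat.floor_le (by positivity)),
    by linarith [Nat.lt_floor_add_one ((n : K) / i)]⟩

lemma mul_sum_div_sub_sum_natCast_div_mul_mem_Icc {K : Type*} [Field K] [LinearOrder K]
    [IsStrictOrderedRing K] [FloorSemiring K] (s : Finset ℕ) {f : ℕ → K} (hf : ∀ i ∈ s, 0 ≤ f i)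
    (n : ℕ) :
    (n : K) * ∑ i ∈ s, f i / i - ∑ i ∈ s, ((n / i : ℕ) : K) * f i ∈ Set.Icc 0 (∑ i ∈ s, f i) := by
  have hsum : (n : K) * ∑ i ∈ s, f i / i - ∑ i ∈ s, ((n / i : ℕ) : K) * f i
      = ∑ i ∈ s, ((n : K) / i - (n / i : ℕ)) * f i := by
    rw [mul_sum, ← sum_sub_distrib]
    exact sum_congr rfl fun i _ => by ring
  rw [hsum]
  have hfract (i : ℕ) := natCast_div_sub_natCast_div_mem_Ico (K := K) n i
  exact ⟨sum_nonneg fun i hi => mul_nonneg (hfract i).1 (hf i hi),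
    sum_le_sum fun i hi => mul_le_of_le_one_left (hf i hi) (hfract i).2.le⟩

theorem sum_pow_omega_weighted_reciprocal_sum_general (n k : ℕ) (hk : 0 < k) :
    (0 ≤ (n : ℚ) * ∑ i ∈ Finset.Icc 1 n, (delta k i : ℚ) / i
          - ∑ i ∈ Finset.Icc 1 n, ((n / i : ℕ) : ℚ) * delta k i ∧
      (n : ℚ) * ∑ i ∈ Finset.Icc 1 n, (delta k i : ℚ) / i
          - ∑ i ∈ Finset.Icc 1 n, ((n / i : ℕ) : ℚ) * delta k i ≤ Delta k n) ∧
    |(∑ i ∈ Finset.Icc 1 n, (k : ℚ) ^ i.primeFactors.card)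
        - (n : ℚ) * ∑ i ∈ Finset.Icc 1 n, (delta k i : ℚ) / i| ≤ Delta k n := by
  obtain ⟨hlow, hup⟩ := mul_sum_div_sub_sum_natCast_div_mul_mem_Icc (K := ℚ) (Icc 1 n)
    (f := fun i => (delta k i : ℚ)) (fun _ _ => Nat.cast_nonneg _) n
  have hDelta : (Delta k n : ℚ) = ∑ i ∈ Icc 1 n, (delta k i : ℚ) := by
    rw [Delta, Nat.cast_sum]
  have hpow : ∑ i ∈ Icc 1 n, (k : ℚ) ^ i.primeFactors.card
      = ∑ i ∈ Icc 1 n, ((n / i : ℕ) : ℚ) * delta k i := by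
    simp_rw [mul_comm _ (delta k _ : ℚ)]
    exact_mod_cast sum_Icc_pow_card_primeFactors_eq_sum_delta_mul_div hk n
  rw [← hDelta] at hup
  refine ⟨⟨hlow, hup⟩, ?_⟩
  rwa [hpow, abs_sub_comm, abs_of_nonneg hlow]

/-- For all positive integers `n` and `k`,
`0 ≤ n · Σ_{i=1}^{n} δ_k(i)/i − Σ_{i=1}^{n} ⌊n/i⌋ δ_k(i) ≤ Δ_k(n)` (computed in `ℚ`);
in particular `Σ_{i=1}^{n} k^{ω(i)} = n · Σ_{i=1}^{n} δ_k(i)/i + O(Δ_k(n))`, i.e.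
`|Σ_{i=1}^{n} k^{ω(i)} − n · Σ_{i=1}^{n} δ_k(i)/i| ≤ Δ_k(n)`. -/
theorem sum_pow_omega_weighted_reciprocal_sum (n k : ℕ) (hn : 0 < n) (hk : 0 < k) :
    (0 ≤ (n : ℚ) * ∑ i ∈ Finset.Icc 1 n, (delta k i : ℚ) / i
          - ∑ i ∈ Finset.Icc 1 n, ((n / i : ℕ) : ℚ) * delta k i ∧
      (n : ℚ) * ∑ i ∈ Finset.Icc 1 n, (delta k i : ℚ) / i
          - ∑ i ∈ Finset.Icc 1 n, ((n / i : ℕ) : ℚ) * delta k i ≤ Delta k n) ∧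
    |(∑ i ∈ Finset.Icc 1 n, (k : ℚ) ^ i.primeFactors.card)
        - (n : ℚ) * ∑ i ∈ Finset.Icc 1 n, (delta k i : ℚ) / i| ≤ Delta k n :=
  sum_pow_omega_weighted_reciprocal_sum_general n k hk
end

section
/- For all positive integers x and k, T_k(x) = A_k(x) − B_k(x). -/
/-!
Grouping the tuples by their product `m`, a pairwise coprime `k`-tuple with product `m` is the
same as a distribution of the prime powers `p ^ v_p(m)` among the `k` coordinates, so there are
`k ^ ω(m)` of them. Expanding `k ^ ω(m) = ((k - 1) + 1) ^ ω(m)` over the subsets of the prime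
factors of `m` gives `∑_{d ∣ m squarefree} (k - 1) ^ ω(d)`, and swapping the two sums counts each
squarefree `d ≤ x` once for each of its `⌊x / d⌋` multiples up to `x`. What remains of `A_k(x)`
after dropping the squarefree terms is `B_k(x)`.
-/

open Finset

namespace Nat

section PairwiseCoprime

variable {ι : Type*} {a : ι → ℕ}

lemma eq_of_prime_dvd_of_pairwise_coprime (ha : ∀ i j, i ≠ j → Coprime (a i) (a j))
    {p : ℕ} (hp : p.Prime) {i j : ι} (hi : p ∣ a i) (hj : p ∣ a j) : i = j := by
  by_contra hij
  exact Prime.not_coprime_iff_dvd.2 ⟨p, hp, hi, hj⟩ (ha i j hij)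

lemma factorization_prod_of_pairwise_coprime [Fintype ι]
    (ha : ∀ i j, i ≠ j → Coprime (a i) (a j)) (h0 : ∏ j, a j ≠ 0) {p : ℕ} (hp : p.Prime)
    {i : ι} (hi : p ∣ a i) :
    (∏ j, a j).factorization p = (a i).factorization p := by
  rw [factorization_prod fun j _ => ne_zero_of_dvd_ne_zero h0 (dvd_prod_of_mem a (mem_univ j)),
    Finsupp.finsetSum_apply, sum_eq_single i]
  · intro j _ hji
    exact factorization_eq_zero_of_not_dvd fun hj =>
      hji (eq_of_prime_dvd_of_pairwise_coprime ha hp hj hi)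
  · simp

lemma eq_of_pairwise_coprime_of_prime_dvd_iff [Fintype ι] {b : ι → ℕ}
    (ha : ∀ i j, i ≠ j → Coprime (a i) (a j)) (hb : ∀ i j, i ≠ j → Coprime (b i) (b j))
    (hab : ∏ i, a i = ∏ i, b i) (h0 : ∏ i, a i ≠ 0)
    (hdvd : ∀ p, p.Prime → ∀ i, p ∣ a i ↔ p ∣ b i) : a = b := by
  have hb0 : ∏ i, b i ≠ 0 := hab ▸ h0
  funext i
  refine eq_of_factorization_eq (ne_zero_of_dvd_ne_zero h0 (dvd_prod_of_mem a (mem_univ i)))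
    (ne_zero_of_dvd_ne_zero hb0 (dvd_prod_of_mem b (mem_univ i))) fun p => ?_
  by_cases hp : p.Prime
  · by_cases hpa : p ∣ a i
    · rw [← factorization_prod_of_pairwise_coprime ha h0 hp hpa,
        ← factorization_prod_of_pairwise_coprime hb hb0 hp ((hdvd p hp i).1 hpa), hab]
    · rw [factorization_eq_zero_of_not_dvd hpa,
        factorization_eq_zero_of_not_dvd (mt (hdvd p hp i).2 hpa)]
  · simp [factorization_eq_zero_of_not_prime _ hp]

end PairwiseCoprime

section Colouring

variable {k m : ℕ}

def colourPart (m : ℕ) (c : m.primeFactors → Fin k) (i : Fin k) : ℕ :=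
  ∏ p ∈ m.primeFactors.attach with c p = i, (p : ℕ) ^ m.factorization p

lemma prod_colourPart (hm : m ≠ 0) (c : m.primeFactors → Fin k) :
    ∏ i, colourPart m c i = m := by
  simp only [colourPart]
  rw [prod_fiberwise, prod_attach m.primeFactors fun p => p ^ m.factorization p]
  exact prod_factorization_pow_eq_self hm

lemma colourPart_dvd (hm : m ≠ 0) (c : m.primeFactors → Fin k) (i : Fin k) :
    colourPart m c i ∣ m := by
  conv_rhs => rw [← prod_colourPart hm c]
  exact dvd_prod_of_mem _ (mem_univ i)

lemma prime_dvd_colourPart_iff (c : m.primeFactors → Fin k) (p : m.primeFactors) (i : Fin k) :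
    (p : ℕ) ∣ colourPart m c i ↔ c p = i := by
  have hp := prime_of_mem_primeFactors p.2
  constructor
  · rw [colourPart, hp.prime.dvd_finsetProd_iff]
    rintro ⟨q, hq, hpq⟩
    obtain rfl : p = q := Subtype.ext <|
      (prime_dvd_prime_iff_eq hp (prime_of_mem_primeFactors q.2)).1 (hp.dvd_of_dvd_pow hpq)
    exact (mem_filter.1 hq).2
  · rintro rfl
    exact (dvd_pow_self _ (Finsupp.mem_support_iff.1 p.2)).trans
      (dvd_prod_of_mem _ (mem_filter.2 ⟨mem_attach _ p, rfl⟩))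

lemma coprime_colourPart (c : m.primeFactors → Fin k) (i j : Fin k) (hij : i ≠ j) :
    Coprime (colourPart m c i) (colourPart m c j) := by
  refine Coprime.prod_left fun p hp => Coprime.prod_right fun q hq => Coprime.pow _ _ ?_
  refine (coprime_primes (prime_of_mem_primeFactors p.2) (prime_of_mem_primeFactors q.2)).2 ?_
  rintro hpq
  rw [← (mem_filter.1 hp).2, ← (mem_filter.1 hq).2, Subtype.ext hpq] at hij
  exact hij rfl

lemma card_filter_pairwise_coprime_finMulAntidiag (hm : m ≠ 0) :
    #{a ∈ finMulAntidiag k m | ∀ i j, i ≠ j → Coprime (a i) (a j)} = k ^ #m.primeFactors := by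
  have hcard : #(univ : Finset (m.primeFactors → Fin k)) = k ^ #m.primeFactors := by simp
  rw [← hcard]
  symm
  refine card_bij (fun c _ => colourPart m c) (fun c _ => ?_) (fun c₁ _ c₂ _ h => ?_) ?_
  · exact mem_filter.2 ⟨mem_finMulAntidiag.2 ⟨prod_colourPart hm c, hm⟩, coprime_colourPart c⟩
  · funext p
    exact ((prime_dvd_colourPart_iff c₂ p _).1 (h ▸ (prime_dvd_colourPart_iff c₁ p _).2 rfl)).symm
  · intro a ha
    obtain ⟨ha, hcop⟩ := mem_filter.1 ha
    have hprod := prod_eq_of_mem_finMulAntidiag ha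
    have hex : ∀ p : m.primeFactors, ∃ i, (p : ℕ) ∣ a i := fun p => by
      obtain ⟨i, -, hi⟩ := (prime_of_mem_primeFactors p.2).prime.exists_mem_finset_dvd
        (by rw [hprod]; exact dvd_of_mem_primeFactors p.2)
      exact ⟨i, hi⟩
    choose c hc using hex
    refine ⟨c, mem_univ c, eq_of_pairwise_coprime_of_prime_dvd_iff (coprime_colourPart c) hcop
      (by rw [prod_colourPart hm, hprod]) (by rwa [prod_colourPart hm]) fun q hq i => ?_⟩
    by_cases hqm : q ∣ m
    · let p : m.primeFactors := ⟨q, mem_primeFactors.2 ⟨hq, hqm, hm⟩⟩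
      rw [prime_dvd_colourPart_iff c p]
      exact ⟨fun h => h ▸ hc p, eq_of_prime_dvd_of_pairwise_coprime hcop hq (hc p)⟩
    · exact iff_of_false (fun h => hqm (h.trans (colourPart_dvd hm c i)))
        fun h => hqm (h.trans (dvd_of_mem_finMulAntidiag ha i))

end Colouring

lemma sum_divisors_filter_squarefree_pow {R : Type*} [CommSemiring R] (r : R) {m : ℕ}
    (hm : m ≠ 0) :
    ∑ d ∈ m.divisors with Squarefree d, r ^ #d.primeFactors = (r + 1) ^ #m.primeFactors := by
  rw [sum_divisors_filter_squarefree hm, factors_eq, ← prod_const (b := r + 1), prod_add_one]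
  refine sum_congr rfl fun t ht => ?_
  rw [prod_const, prod_val]
  congr 2
  exact primeFactors_prod fun p hp => prime_of_mem_primeFactors (mem_powerset.1 ht hp)

lemma sum_Icc_sum_divisors {M : Type*} [AddCommMonoid M] (x : ℕ) (f : ℕ → M) :
    ∑ m ∈ Icc 1 x, ∑ d ∈ m.divisors, f d = ∑ d ∈ Icc 1 x, (x / d) • f d := by
  calc ∑ m ∈ Icc 1 x, ∑ d ∈ m.divisors, f d
      = ∑ d ∈ Icc 1 x, ∑ m ∈ Icc 1 x with d ∣ m, f d := by
        refine sum_comm' fun m d => ?_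
        simp only [mem_Icc, mem_filter, mem_divisors]
        constructor
        · rintro ⟨hm, hdm, -⟩
          exact ⟨⟨hm, hdm⟩, pos_of_dvd_of_pos hdm hm.1, (le_of_dvd hm.1 hdm).trans hm.2⟩
        · rintro ⟨⟨hm, hdm⟩, -⟩
          exact ⟨hm, hdm, by omega⟩
    _ = ∑ d ∈ Icc 1 x, (x / d) • f d := by
        refine sum_congr rfl fun d _ => ?_
        rw [sum_const, show Icc 1 x = Ioc 0 x from rfl, Ioc_filter_dvd_card_eq_div]

lemma card_filter_pairwise_coprime_prod_le (x k : ℕ) :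
    #{a ∈ Fintype.piFinset fun _ : Fin k => Icc 1 x |
        (∀ i j, i ≠ j → Coprime (a i) (a j)) ∧ ∏ i, a i ≤ x}
      = ∑ m ∈ Icc 1 x, #{a ∈ finMulAntidiag k m | ∀ i j, i ≠ j → Coprime (a i) (a j)} := by
  rw [card_eq_sum_card_fiberwise (f := fun a => ∏ i, a i) (t := Icc 1 x)]
  · refine sum_congr rfl fun m hm => congrArg card <| ext fun a => ?_
    simp only [mem_filter, mem_finMulAntidiag, Fintype.mem_piFinset, mem_Icc] at hm ⊢
    constructor
    · rintro ⟨⟨-, hcop, -⟩, hprod⟩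
      exact ⟨⟨hprod, by omega⟩, hcop⟩
    · rintro ⟨⟨hprod, -⟩, hcop⟩
      have hdvd : ∀ i, a i ∣ m := fun i => hprod ▸ dvd_prod_of_mem a (mem_univ i)
      exact ⟨⟨fun i => ⟨pos_of_dvd_of_pos (hdvd i) hm.1, (le_of_dvd hm.1 (hdvd i)).trans hm.2⟩,
        hcop, by omega⟩, hprod⟩
  · intro a ha
    simp only [coe_filter, Fintype.mem_piFinset, Set.mem_ofPred_eq, mem_coe, mem_Icc] at ha ⊢
    exact ⟨one_le_prod' fun i _ => (ha.1 i).1, ha.2.2⟩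

end Nat

open Nat

theorem T_eq_A_sub_B_general (x k : ℕ) :
    (((Fintype.piFinset fun _ : Fin k => Finset.Icc 1 x).filter
        (fun a => (∀ i j, i ≠ j → Nat.Coprime (a i) (a j)) ∧ ∏ i, a i ≤ x)).card : ℤ)
      = (∑ n ∈ Finset.Icc 1 x, ((x / n : ℕ) : ℤ) * (k - 1) ^ n.primeFactors.card)
        - ∑ n ∈ (Finset.Icc 1 x).filter (fun n => ¬ Squarefree n),
            ((x / n : ℕ) : ℤ) * (k - 1) ^ n.primeFactors.card := by
  rw [eq_sub_iff_add_eq, ← sum_filter_add_sum_filter_not (Icc 1 x) Squarefree, add_left_inj]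
  calc _ = ∑ m ∈ Icc 1 x, (k : ℤ) ^ #m.primeFactors := by
        rw [card_filter_pairwise_coprime_prod_le]
        push_cast
        exact sum_congr rfl fun m hm =>
          mod_cast card_filter_pairwise_coprime_finMulAntidiag (by grind)
    _ = ∑ m ∈ Icc 1 x, ∑ d ∈ m.divisors with Squarefree d, ((k : ℤ) - 1) ^ #d.primeFactors := by
        refine sum_congr rfl fun m hm => ?_
        rw [sum_divisors_filter_squarefree_pow _ (by grind), sub_add_cancel]
    _ = ∑ d ∈ Icc 1 x with Squarefree d, ((x / d : ℕ) : ℤ) * ((k : ℤ) - 1) ^ #d.primeFactors := by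
        simp only [sum_filter, sum_Icc_sum_divisors, smul_ite, smul_zero, nsmul_eq_mul]

/-- For all positive integers `x` and `k`, `T_k(x) = A_k(x) − B_k(x)`,
where `T_k(x)` is the number of ordered `k`-tuples of pairwise relatively prime
positive integers `≤ x` with product at most `x`,
`A_k(x) = Σ_{n ≤ x} ⌊x/n⌋ (k−1)^{ω(n)}`, and
`B_k(x) = Σ_{n ≤ x, n not squarefree} ⌊x/n⌋ (k−1)^{ω(n)}`. -/
theorem T_eq_A_sub_B (x k : ℕ) (hx : 0 < x) (hk : 0 < k) :
    (((Fintype.piFinset fun _ : Fin k => Finset.Icc 1 x).filter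
        (fun a => (∀ i j, i ≠ j → Nat.Coprime (a i) (a j)) ∧ ∏ i, a i ≤ x)).card : ℤ)
      = (∑ n ∈ Finset.Icc 1 x, ((x / n : ℕ) : ℤ) * (k - 1) ^ n.primeFactors.card)
        - ∑ n ∈ (Finset.Icc 1 x).filter (fun n => ¬ Squarefree n),
            ((x / n : ℕ) : ℤ) * (k - 1) ^ n.primeFactors.card :=
  T_eq_A_sub_B_general x k
end

section
/- For all positive integers x, k, m, Σ_{d | m} μ(d) · C_k(⌊x/d⌋, d) = E_k(x, m), where the sum runs over all positive divisors d of m and μ is the Möbius function. -/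
/-- `C k x m = Σ_{n ≤ x} ⌊x/n⌋ (k−1)^{ω(mn)}`. -/
def C (k x m : ℕ) : ℕ :=
  ∑ n ∈ Finset.Icc 1 x, (x / n) * (k - 1) ^ (m * n).primeFactors.card

/-- `E k x m = Σ_{n ≤ x, gcd(m,n)=1} ⌊x/n⌋ (k−1)^{ω(n)}`. -/
def E (k x m : ℕ) : ℕ :=
  ∑ n ∈ (Finset.Icc 1 x).filter (fun n => Nat.gcd m n = 1),
    (x / n) * (k - 1) ^ n.primeFactors.card

/-!
Substituting `j = d n` turns `C_k(⌊x/d⌋, d)` into the sum of `⌊x/j⌋ (k−1)^{ω(j)}` over the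
multiples `j ≤ x` of `d`. Exchanging the order of summation, the term of `j` is weighted by
`Σ_{d ∣ gcd(m, j)} μ(d)`, which is `1` if `gcd(m, j) = 1` and `0` otherwise.
-/

open Finset

theorem sum_Icc_filter_dvd_eq_sum_Icc_div {M : Type*} [AddCommMonoid M] {d : ℕ} (hd : d ≠ 0)
    (x : ℕ) (f : ℕ → M) :
    ∑ j ∈ Icc 1 x with d ∣ j, f j = ∑ n ∈ Icc 1 (x / d), f (d * n) := by
  have hd' := Nat.pos_of_ne_zero hd
  have : {j ∈ Icc 1 x | d ∣ j} = (Icc 1 (x / d)).map ⟨(d * ·), mul_right_injective₀ hd⟩ := by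
    ext j
    simp only [mem_filter, mem_Icc, mem_map, Function.Embedding.coeFn_mk]
    constructor
    · rintro ⟨⟨hj1, hjx⟩, n, rfl⟩
      refine ⟨n, ⟨Nat.pos_of_mul_pos_left hj1, ?_⟩, rfl⟩
      rwa [Nat.le_div_iff_mul_le hd', mul_comm]
    · rintro ⟨n, ⟨hn1, hnx⟩, rfl⟩
      refine ⟨⟨Nat.mul_pos hd' hn1, ?_⟩, dvd_mul_right d n⟩
      rwa [Nat.le_div_iff_mul_le hd', mul_comm] at hnx
  rw [this, sum_map]
  rfl

namespace ArithmeticFunction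

theorem sum_divisors_moebius {R : Type*} [Ring R] (n : ℕ) :
    ∑ d ∈ n.divisors, (moebius d : R) = if n = 1 then 1 else 0 := by
  simp_rw [← intCoe_apply, ← coe_mul_zeta_apply, coe_moebius_mul_coe_zeta, one_apply]

theorem sum_divisors_filter_dvd_moebius {R : Type*} [Ring R] {m : ℕ} (hm : m ≠ 0) (j : ℕ) :
    ∑ d ∈ m.divisors with d ∣ j, (moebius d : R) = if Nat.gcd m j = 1 then 1 else 0 := by
  have : {d ∈ m.divisors | d ∣ j} = (Nat.gcd m j).divisors := by
    rw [← Nat.divisors_filter_dvd_of_dvd hm (Nat.gcd_dvd_left m j)]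
    exact filter_congr fun d hd => by
      rw [Nat.dvd_gcd_iff, and_iff_right (Nat.dvd_of_mem_divisors hd)]
  rw [this, sum_divisors_moebius]

theorem sum_moebius_mul_sum_filter_dvd {R : Type*} [Ring R] {m : ℕ} (hm : m ≠ 0)
    (s : Finset ℕ) (f : ℕ → R) :
    ∑ d ∈ m.divisors, (moebius d : R) * ∑ j ∈ s with d ∣ j, f j =
      ∑ j ∈ s with Nat.gcd m j = 1, f j := by
  simp_rw [mul_sum, sum_filter]
  rw [sum_comm]
  refine sum_congr rfl fun j _ => ?_
  rw [← sum_filter, ← sum_mul, sum_divisors_filter_dvd_moebius hm, ite_mul, one_mul, zero_mul]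

end ArithmeticFunction

theorem C_eq_sum_filter_dvd (k x : ℕ) {d : ℕ} (hd : d ≠ 0) :
    C k (x / d) d = ∑ j ∈ Icc 1 x with d ∣ j, x / j * (k - 1) ^ j.primeFactors.card := by
  simp_rw [sum_Icc_filter_dvd_eq_sum_Icc_div hd, C, Nat.div_div_eq_div_mul]

open ArithmeticFunction in
theorem sum_moebius_C_eq_E_general (x k m : ℕ) (hm : 0 < m) :
    ∑ d ∈ m.divisors, (moebius d : ℤ) * C k (x / d) d = (E k x m : ℤ) := by
  calc ∑ d ∈ m.divisors, (moebius d : ℤ) * C k (x / d) d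
      = ∑ d ∈ m.divisors, (moebius d : ℤ) *
          ∑ j ∈ Icc 1 x with d ∣ j, ((x / j * (k - 1) ^ j.primeFactors.card : ℕ) : ℤ) :=
        sum_congr rfl fun d hd => by
          rw [C_eq_sum_filter_dvd k x (Nat.pos_of_mem_divisors hd).ne', Nat.cast_sum]
    _ = E k x m := by
      rw [E, Nat.cast_sum]
      exact sum_moebius_mul_sum_filter_dvd hm.ne' _ _

open ArithmeticFunction in
/-- For all positive integers `x`, `k`, `m`,
`Σ_{d ∣ m} μ(d) · C_k(⌊x/d⌋, d) = E_k(x, m)`, the sum running over all positive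
divisors of `m`, where `μ` is the Möbius function. -/
theorem sum_moebius_C_eq_E (x k m : ℕ) (hx : 0 < x) (hk : 0 < k) (hm : 0 < m) :
    ∑ d ∈ m.divisors, (moebius d : ℤ) * C k (x / d) d = (E k x m : ℤ) :=
  sum_moebius_C_eq_E_general x k m hm
end

section
/- For all positive integers x, k, m, Σ_{d | m} μ(d) · C_k(⌊x/d⌋, m) = (k−1)^{ω(m)} · E_k(x, m), where the sum runs over all positive divisors d of m and μ is the Möbius function. -/
/-! Substituting `j = d n`, the left side becomes
`Σ_{j ≤ x} ⌊x/j⌋ Σ_{d ∣ gcd(m, j)} μ(d) (k−1)^{ω(m j/d)}`. As `d ∣ m`, `ω(m j/d) = ω(m j)` does not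
depend on `d`, so Möbius inversion keeps exactly the `j` coprime to `m`, for which
`ω(m j) = ω(m) + ω(j)`. -/

open Finset ArithmeticFunction
open scoped ArithmeticFunction.Moebius

theorem sum_Icc_div_mul_eq_sum_filter_dvd {M : Type*} [AddCommMonoid M] {d : ℕ} (hd : 0 < d)
    (x : ℕ) (f : ℕ → M) :
    ∑ n ∈ Icc 1 (x / d), f (d * n) = ∑ j ∈ Icc 1 x with d ∣ j, f j := by
  refine sum_nbij' (d * ·) (· / d) ?_ ?_ ?_ ?_ fun _ _ => rfl
  · intro n hn
    simp only [mem_Icc, mem_filter] at hn ⊢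
    rw [Nat.le_div_iff_mul_le hd] at hn
    exact ⟨⟨Nat.mul_pos hd hn.1, by linarith⟩, dvd_mul_right d n⟩
  · intro j hj
    simp only [mem_Icc, mem_filter] at hj ⊢
    exact ⟨Nat.div_pos (Nat.le_of_dvd hj.1.1 hj.2) hd, Nat.div_le_div_right hj.1.2⟩
  · intro n _
    exact Nat.mul_div_cancel_left n hd
  · intro j hj
    exact Nat.mul_div_cancel' (mem_filter.mp hj).2

theorem Nat.primeFactors_mul_mul_of_dvd {d m n : ℕ} (hdm : d ∣ m) (hm : m ≠ 0) (hn : n ≠ 0) :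
    (m * (d * n)).primeFactors = (m * n).primeFactors := by
  have hd : d ≠ 0 := ne_zero_of_dvd_ne_zero hm hdm
  rw [primeFactors_mul hm (mul_ne_zero hd hn), primeFactors_mul hd hn, primeFactors_mul hm hn,
    ← union_assoc, union_eq_left.mpr (primeFactors_mono hdm hm)]

theorem Nat.Coprime.card_primeFactors_mul {m n : ℕ} (h : m.Coprime n) :
    (m * n).primeFactors.card = m.primeFactors.card + n.primeFactors.card := by
  rw [h.primeFactors_mul, card_union_of_disjoint h.disjoint_primeFactors]

theorem C_div_eq_sum_filter_dvd (k x : ℕ) {d m : ℕ} (hdm : d ∣ m) (hm : m ≠ 0) :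
    C k (x / d) m = ∑ j ∈ Icc 1 x with d ∣ j, x / j * (k - 1) ^ (m * j).primeFactors.card := by
  have hd : 0 < d := Nat.pos_of_dvd_of_pos hdm (Nat.pos_of_ne_zero hm)
  rw [C, ← sum_Icc_div_mul_eq_sum_filter_dvd hd]
  refine sum_congr rfl fun n hn => ?_
  have hn : n ≠ 0 := Nat.one_le_iff_ne_zero.mp (mem_Icc.mp hn).1
  rw [Nat.div_div_eq_div_mul, Nat.primeFactors_mul_mul_of_dvd hdm hm hn]

theorem Nat.divisors_filter_dvd_eq_divisors_gcd {m : ℕ} (hm : m ≠ 0) (j : ℕ) :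
    {d ∈ m.divisors | d ∣ j} = (m.gcd j).divisors := by
  rw [← divisors_filter_dvd_of_dvd hm (gcd_dvd_left m j)]
  exact filter_congr fun d hd => (dvd_gcd_iff.trans (and_iff_right (dvd_of_mem_divisors hd))).symm

theorem sum_moebius_divisors_eq_ite (n : ℕ) :
    ∑ d ∈ n.divisors, μ d = if n = 1 then 1 else 0 := by
  rw [← coe_mul_zeta_apply, moebius_mul_coe_zeta, one_apply]

theorem sum_divisors_moebius_smul_sum_filter_dvd {M : Type*} [AddCommGroup M] {m : ℕ}
    (hm : m ≠ 0) (s : Finset ℕ) (f : ℕ → M) :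
    ∑ d ∈ m.divisors, μ d • ∑ j ∈ s with d ∣ j, f j = ∑ j ∈ s with m.gcd j = 1, f j := by
  calc ∑ d ∈ m.divisors, μ d • ∑ j ∈ s with d ∣ j, f j
      = ∑ j ∈ s, ∑ d ∈ m.divisors with d ∣ j, μ d • f j := by
        simp only [sum_filter, smul_sum, smul_ite, smul_zero]
        exact sum_comm
    _ = ∑ j ∈ s, if m.gcd j = 1 then f j else 0 := by
        refine sum_congr rfl fun j _ => ?_
        rw [← sum_smul, Nat.divisors_filter_dvd_eq_divisors_gcd hm, sum_moebius_divisors_eq_ite,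
          ite_smul, one_smul, zero_smul]
    _ = ∑ j ∈ s with m.gcd j = 1, f j := (sum_filter _ _).symm

open ArithmeticFunction in
theorem sum_moebius_C_eq_pow_omega_mul_E_general (x k m : ℕ) (hk : 0 < k)
    (hm : 0 < m) :
    ∑ d ∈ m.divisors, (moebius d : ℤ) * C k (x / d) m
      = ((k : ℤ) - 1) ^ m.primeFactors.card * E k x m := by
  have hC : ∀ d ∈ m.divisors, (moebius d : ℤ) * C k (x / d) m
      = μ d • ∑ j ∈ Icc 1 x with d ∣ j,
          ((x / j * (k - 1) ^ (m * j).primeFactors.card : ℕ) : ℤ) := by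
    intro d hd
    rw [C_div_eq_sum_filter_dvd k x (Nat.dvd_of_mem_divisors hd) hm.ne', Nat.cast_sum, smul_eq_mul]
  rw [sum_congr rfl hC, sum_divisors_moebius_smul_sum_filter_dvd hm.ne', E, Nat.cast_sum, mul_sum]
  refine sum_congr rfl fun j hj => ?_
  rw [Nat.Coprime.card_primeFactors_mul (mem_filter.mp hj).2]
  push_cast [Nat.cast_sub hk]
  ring

open ArithmeticFunction in
/-- For all positive integers `x`, `k`, `m`,
`Σ_{d ∣ m} μ(d) · C_k(⌊x/d⌋, m) = (k−1)^{ω(m)} · E_k(x, m)`, the sum running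
over all positive divisors of `m`, where `μ` is the Möbius function. -/
theorem sum_moebius_C_eq_pow_omega_mul_E (x k m : ℕ) (hx : 0 < x) (hk : 0 < k)
    (hm : 0 < m) :
    ∑ d ∈ m.divisors, (moebius d : ℤ) * C k (x / d) m
      = ((k : ℤ) - 1) ^ m.primeFactors.card * E k x m :=
  sum_moebius_C_eq_pow_omega_mul_E_general x k m hk hm
end

section
/- For every positive integer n, Σ_{i=1}^{n} 2^{ω(i)} = 2n − 1 + 2 · Σ_{a : 1 < a² < n} ( φ(⌊n/a⌋, a) − φ(a) ), where the sum runs over all integers a > 1 with a² < n. -/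
/-!
`2 ^ ω(i)` counts the ordered factorizations `i = a * b` with `a` and `b` coprime, so the left
side counts the coprime pairs `(a, b)` with `a * b ≤ n`. Apart from `(1, 1)` these come in
mirror-image pairs, and we count those with `a < b`: for `a = 1` there are `n - 1` of them, and
for `a > 1` the admissible `b` are those in `(a, n / a]` coprime to `a`, which number
`φ(⌊n/a⌋, a) − φ(a)` and exist only when `a² < n`.
-/

/-- `phi x a` (written `φ(x, a)` in the paper) is the number of positive
integers not exceeding `x` that are relatively prime to `a`. -/
def phi (x a : ℕ) : ℕ := ((Finset.Icc 1 x).filter (fun b => Nat.Coprime b a)).card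

open Finset

namespace Nat

theorem factorization_eq_filter_of_coprime {a b : ℕ} (hab : a.Coprime b) :
    a.factorization = (a * b).factorization.filter (· ∈ a.primeFactors) := by
  ext p
  rw [factorization_mul_of_coprime hab]
  by_cases hp : p ∈ a.primeFactors
  · have hpb : b.factorization p = 0 :=
      Finsupp.notMem_support_iff.1 (hab.disjoint_primeFactors.notMem_of_mem_left_finset hp)
    rw [Finsupp.filter_apply_pos _ _ hp, Finsupp.add_apply, hpb, add_zero]
  · rw [Finsupp.filter_apply_neg _ _ hp, Finsupp.notMem_support_iff.1 hp]

theorem eq_of_coprime_of_mul_eq_of_primeFactors_eq {a b a' b' : ℕ} (hab : a.Coprime b)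
    (hab' : a'.Coprime b') (h0 : a * b ≠ 0) (hmul : a * b = a' * b')
    (h : a.primeFactors = a'.primeFactors) : a = a' :=
  eq_of_factorization_eq' (left_ne_zero_of_mul h0) (left_ne_zero_of_mul (hmul ▸ h0)) <| by
    rw [factorization_eq_filter_of_coprime hab, factorization_eq_filter_of_coprime hab', hmul, h]

theorem primeFactors_prod_pow {f : ℕ →₀ ℕ} (hf : ∀ p ∈ f.support, p.Prime) :
    (f.prod (· ^ ·)).primeFactors = f.support := by
  rw [← support_factorization, prod_pow_factorization_eq_self hf]

theorem exists_coprime_mul_eq_primeFactors_eq {n : ℕ} {s : Finset ℕ} (hn : n ≠ 0)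
    (hs : s ⊆ n.primeFactors) : ∃ a b, a * b = n ∧ a.Coprime b ∧ a.primeFactors = s := by
  have hprime (q : ℕ → Prop) [DecidablePred q] :
      ∀ p ∈ (n.factorization.filter q).support, p.Prime :=
    fun _ hp ↦ prime_of_mem_primeFactors (mem_filter.1 hp).1
  set f := n.factorization.filter (· ∈ s)
  set g := n.factorization.filter (· ∉ s)
  have hfg : f.prod (· ^ ·) * g.prod (· ^ ·) = n := by
    rw [← Finsupp.prod_add_index' (by simp) (fun _ _ _ ↦ pow_add _ _ _),
      Finsupp.filter_add_filter_not, prod_factorization_pow_eq_self hn]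
  have hf : (f.prod (· ^ ·)).primeFactors = s := by
    rw [primeFactors_prod_pow (hprime _), Finsupp.support_filter, support_factorization,
      filter_mem_eq_inter, inter_eq_right.2 hs]
  have hcop : (f.prod (· ^ ·)).Coprime (g.prod (· ^ ·)) := by
    rw [← disjoint_primeFactors (left_ne_zero_of_mul (hfg ▸ hn))
      (right_ne_zero_of_mul (hfg ▸ hn)), hf, primeFactors_prod_pow (hprime _),
      Finsupp.support_filter]
    exact disjoint_left.2 fun _ hp hp' ↦ (mem_filter.1 hp').2 hp
  exact ⟨_, _, hfg, hcop, hf⟩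

theorem card_filter_coprime_divisorsAntidiagonal {n : ℕ} (hn : n ≠ 0) :
    #{x ∈ n.divisorsAntidiagonal | x.1.Coprime x.2} = 2 ^ #n.primeFactors := by
  rw [← card_powerset]
  refine card_bij (fun x _ ↦ x.1.primeFactors) ?_ ?_ ?_
  · simp only [mem_filter, mem_divisorsAntidiagonal, mem_powerset, and_imp]
    rintro ⟨a, b⟩ rfl - -
    exact primeFactors_mono (dvd_mul_right a b) hn
  · simp only [mem_filter, mem_divisorsAntidiagonal, and_imp]
    rintro ⟨a, b⟩ rfl h0 hab ⟨a', b'⟩ hmul - hab' h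
    obtain rfl := eq_of_coprime_of_mul_eq_of_primeFactors_eq hab hab' h0 hmul.symm h
    exact Prod.ext rfl (Nat.eq_of_mul_eq_mul_left (pos_of_ne_zero (left_ne_zero_of_mul h0))
      hmul.symm)
  · intro s hs
    obtain ⟨a, b, hab, hcop, hs⟩ := exists_coprime_mul_eq_primeFactors_eq hn (mem_powerset.1 hs)
    exact ⟨(a, b), mem_filter.2 ⟨mem_divisorsAntidiagonal.2 ⟨hab, hn⟩, hcop⟩, hs⟩

end Nat

theorem phi_self (a : ℕ) : phi a a = a.totient := by
  rw [phi, ← Nat.filter_coprime_Ico_eq_totient a 1, add_comm, Ico_add_one_right_eq_Icc]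
  simp only [Nat.coprime_comm]

theorem phi_eq_totient_add_card_Ioc {a m : ℕ} (ham : a ≤ m) :
    phi m a = a.totient + #{b ∈ Ioc a m | b.Coprime a} := by
  rw [← phi_self, phi, phi, ← card_union_of_disjoint, ← filter_union]
  · congr 2
    ext b
    simp only [mem_union, mem_Icc, mem_Ioc]
    omega
  · exact disjoint_filter_filter <| disjoint_left.2 fun b hb hb' ↦ by
      simp only [mem_Icc, mem_Ioc] at hb hb'
      omega

def coprimePairs (n : ℕ) : Finset (ℕ × ℕ) :=
  {x ∈ Icc 1 n ×ˢ Icc 1 n | x.1 * x.2 ≤ n ∧ x.1.Coprime x.2}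

theorem mem_coprimePairs {n : ℕ} {x : ℕ × ℕ} :
    x ∈ coprimePairs n ↔ 0 < x.1 ∧ 0 < x.2 ∧ x.1 * x.2 ≤ n ∧ x.1.Coprime x.2 := by
  simp only [coprimePairs, mem_filter, mem_product, mem_Icc]
  constructor
  · rintro ⟨⟨⟨h1, -⟩, h2, -⟩, h⟩
    exact ⟨h1, h2, h⟩
  · rintro ⟨h1, h2, hle, hcop⟩
    refine ⟨⟨⟨h1, ?_⟩, h2, ?_⟩, hle, hcop⟩ <;> nlinarith

theorem sum_card_filter_coprime_divisorsAntidiagonal (n : ℕ) :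
    ∑ i ∈ Icc 1 n, #{x ∈ i.divisorsAntidiagonal | x.1.Coprime x.2} = #(coprimePairs n) := by
  rw [card_eq_sum_card_fiberwise (f := fun x ↦ x.1 * x.2) (t := Icc 1 n)]
  · refine sum_congr rfl fun i hi ↦ congrArg card (ext fun x ↦ ?_)
    rw [mem_Icc] at hi
    simp only [mem_filter, Nat.mem_divisorsAntidiagonal, mem_coprimePairs]
    constructor
    · rintro ⟨⟨rfl, -⟩, hcop⟩
      exact ⟨⟨Nat.pos_of_mul_pos_right hi.1, Nat.pos_of_mul_pos_left hi.1, hi.2, hcop⟩, rfl⟩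
    · rintro ⟨⟨-, -, -, hcop⟩, rfl⟩
      exact ⟨⟨rfl, by omega⟩, hcop⟩
  · intro x hx
    rw [mem_coe, mem_coprimePairs] at hx
    exact mem_Icc.2 ⟨Nat.mul_pos hx.1 hx.2.1, hx.2.2.1⟩

theorem card_coprimePairs {n : ℕ} (hn : 0 < n) :
    #(coprimePairs n) = 2 * #{x ∈ coprimePairs n | x.1 < x.2} + 1 := by
  have hswap : #{x ∈ coprimePairs n | x.2 < x.1} = #{x ∈ coprimePairs n | x.1 < x.2} := by
    refine card_nbij' Prod.swap Prod.swap ?_ ?_ (fun _ _ ↦ rfl) (fun _ _ ↦ rfl) <;>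
    · intro x hx
      simp only [coe_filter, Set.mem_ofPred_eq, mem_coprimePairs, Prod.fst_swap,
        Prod.snd_swap] at hx ⊢
      obtain ⟨⟨h1, h2, hle, hcop⟩, hlt⟩ := hx
      exact ⟨⟨h2, h1, mul_comm x.1 x.2 ▸ hle, hcop.symm⟩, hlt⟩
  have hdiag : {x ∈ coprimePairs n | x.1 = x.2} = {(1, 1)} := by
    ext ⟨a, b⟩
    simp only [mem_filter, mem_coprimePairs, mem_singleton, Prod.mk.injEq]
    constructor
    · rintro ⟨⟨-, -, -, hcop⟩, rfl⟩
      exact ⟨(Nat.coprime_self a).1 hcop, (Nat.coprime_self a).1 hcop⟩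
    · rintro ⟨rfl, rfl⟩
      exact ⟨⟨one_pos, one_pos, hn, Nat.coprime_one_left 1⟩, rfl⟩
  have hlt := card_filter_add_card_filter_not (s := coprimePairs n) (fun x ↦ x.1 < x.2)
  have hgt := card_filter_add_card_filter_not
    (s := {x ∈ coprimePairs n | ¬ x.1 < x.2}) (fun x ↦ x.2 < x.1)
  have hne_gt :
      {x ∈ coprimePairs n | ¬ x.1 < x.2 ∧ x.2 < x.1} = {x ∈ coprimePairs n | x.2 < x.1} :=
    filter_congr fun x _ ↦ by omega
  have hne_eq : {x ∈ coprimePairs n | ¬ x.1 < x.2 ∧ ¬ x.2 < x.1} =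
      {x ∈ coprimePairs n | x.1 = x.2} :=
    filter_congr fun x _ ↦ by omega
  rw [filter_filter, filter_filter, hne_gt, hne_eq, hswap, hdiag, card_singleton] at hgt
  omega

theorem card_filter_coprimePairs_fst_lt_snd (n : ℕ) :
    #{x ∈ coprimePairs n | x.1 < x.2} = ∑ a ∈ Icc 1 n, #{b ∈ Ioc a (n / a) | b.Coprime a} := by
  rw [card_eq_sum_card_fiberwise (f := Prod.fst) (t := Icc 1 n)]
  · refine sum_congr rfl fun a ha ↦ ?_
    have ha0 : 0 < a := (mem_Icc.1 ha).1
    rw [← one_mul #{b ∈ Ioc a (n / a) | b.Coprime a}, ← card_singleton a, ← card_product]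
    refine congrArg card (ext fun ⟨x, b⟩ ↦ ?_)
    simp only [mem_filter, mem_coprimePairs, mem_product, mem_singleton, mem_Ioc,
      Nat.le_div_iff_mul_le ha0]
    constructor
    · rintro ⟨⟨⟨-, -, hle, hcop⟩, hlt⟩, rfl⟩
      exact ⟨rfl, ⟨hlt, mul_comm x b ▸ hle⟩, hcop.symm⟩
    · rintro ⟨rfl, ⟨hlt, hle⟩, hcop⟩
      exact ⟨⟨⟨ha0, by omega, mul_comm b x ▸ hle, hcop.symm⟩, hlt⟩, rfl⟩
  · intro x hx
    simp only [coe_filter, Set.mem_ofPred_eq, mem_coprimePairs] at hx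
    obtain ⟨⟨h1, h2, hle, -⟩, -⟩ := hx
    exact mem_Icc.2 ⟨h1, le_trans (Nat.le_mul_of_pos_right _ h2) hle⟩

theorem sum_card_filter_coprime_Ioc_div (n : ℕ) :
    ∑ a ∈ Icc 1 n, #{b ∈ Ioc a (n / a) | b.Coprime a}
      = (n - 1) + ∑ a ∈ Icc 1 n with 1 < a ∧ a ^ 2 < n, #{b ∈ Ioc a (n / a) | b.Coprime a} := by
  rw [← sum_filter_add_sum_filter_not (Icc 1 n) (fun a ↦ 1 < a ∧ a ^ 2 < n), add_comm]
  congr 1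
  rcases Nat.eq_zero_or_pos n with rfl | hn
  · rfl
  rw [sum_eq_single_of_mem 1 (by simp [Nat.one_le_iff_ne_zero, hn.ne']), Nat.div_one,
    filter_true_of_mem fun b _ ↦ b.coprime_one_right, Nat.card_Ioc]
  intro a ha ha1
  simp only [mem_filter, mem_Icc, not_and, not_lt] at ha
  have hdiv : n / a ≤ a := Nat.div_le_of_le_mul (by nlinarith [ha.2 (by omega)])
  rw [Ioc_eq_empty_of_le hdiv, filter_empty, card_empty]

/-- For every positive integer `n`,
`Σ_{i=1}^{n} 2^{ω(i)} = 2n − 1 + 2 · Σ_{a : 1 < a, a² < n} (φ(⌊n/a⌋, a) − φ(a))`,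
the sum running over all integers `a > 1` with `a² < n`, where `φ(a)` is
Euler's totient function. -/
theorem sum_two_pow_omega_eq_totient_sum (n : ℕ) (hn : 0 < n) :
    ((∑ i ∈ Finset.Icc 1 n, 2 ^ i.primeFactors.card : ℕ) : ℤ)
      = 2 * n - 1 + 2 * ∑ a ∈ (Finset.Icc 1 n).filter (fun a => 1 < a ∧ a ^ 2 < n),
          ((phi (n / a) a : ℤ) - (Nat.totient a : ℤ)) := by
  have hcount : ∑ i ∈ Icc 1 n, 2 ^ #i.primeFactors = 2 * ((n - 1) +
      ∑ a ∈ Icc 1 n with 1 < a ∧ a ^ 2 < n, #{b ∈ Ioc a (n / a) | b.Coprime a}) + 1 := by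
    rw [← sum_card_filter_coprime_Ioc_div, ← card_filter_coprimePairs_fst_lt_snd,
      ← card_coprimePairs hn, ← sum_card_filter_coprime_divisorsAntidiagonal]
    exact sum_congr rfl fun i hi ↦ (Nat.card_filter_coprime_divisorsAntidiagonal
      (Nat.one_le_iff_ne_zero.1 (mem_Icc.1 hi).1)).symm
  have hsummand : ∀ a ∈ (Icc 1 n).filter (fun a ↦ 1 < a ∧ a ^ 2 < n),
      (phi (n / a) a : ℤ) - a.totient = #{b ∈ Ioc a (n / a) | b.Coprime a} := by
    intro a ha
    obtain ⟨-, ha1, hlt⟩ := mem_filter.1 ha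
    have hle : a ≤ n / a := (Nat.le_div_iff_mul_le (by omega)).2 (by nlinarith)
    rw [phi_eq_totient_add_card_Ioc hle]
    push_cast
    ring
  rw [hcount, sum_congr rfl hsummand]
  push_cast [Nat.cast_sub hn]
  ring
end
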